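/- arXiv:1808.02700 — 5 statements merged into one kernel-verified Lean document; each statement's English description precedes it below -/
import Mathlib

section
/- Given an A-derivation D : R → M and a monoid homomorphism δ : (Γ,·) → (M,+), the map D̃ : F(Γ,R) → F(Γ,M) defined by D̃(α)(n) = D(α(n)) + α(n)δ(n) is an A-derivation, i.e., it is A-linear and satisfies D̃(α·β) = D̃(α)·β + α·D̃(β) with respect to Dirichlet convolution. -/
/-- Type synonym: functions from `Γ` to `R` (to carry the Dirichlet-convolution
ring structure, distinct from the pointwise one). -/
def DirF (Γ R : Type*) : Type _ := Γ → R

/-- `Γ` is a monoid of finite type: every element has finitely many factorizations. -/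
def FiniteMulType (Γ : Type*) [Mul Γ] : Prop :=
  ∀ n : Γ, {p : Γ × Γ | p.1 * p.2 = n}.Finite

/-- Dirichlet convolution. -/
noncomputable def dconv {Γ R : Type*} [Mul Γ] [NonUnitalNonAssocSemiring R]
    (α β : DirF Γ R) : DirF Γ R :=
  fun n => ∑ᶠ p ∈ {p : Γ × Γ | p.1 * p.2 = n}, α p.1 * β p.2

/-- A ring structure on `DirF Γ R` is *the* Dirichlet convolution ring structure if addition is
pointwise, multiplication is Dirichlet convolution, and the unity is `e` (`e 1 = 1`, `e n = 0`
for `n ≠ 1`). -/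
def IsDirichletRing {Γ R : Type*} [Monoid Γ] [Ring R] (inst : Ring (DirF Γ R)) : Prop := by
  letI := inst
  exact (∀ α β : DirF Γ R, ∀ n : Γ, (α + β) n = α n + β n) ∧
    (∀ α β : DirF Γ R, α * β = dconv α β) ∧
    ((1 : DirF Γ R) 1 = 1 ∧ ∀ n : Γ, n ≠ 1 → (1 : DirF Γ R) n = 0)

/-- Dirichlet convolution action of `F(Γ,R)` on `F(Γ,M)`. -/
noncomputable def dsmul {Γ R M : Type*} [Mul Γ] [Semiring R] [AddCommMonoid M] [Module R M]
    (α : DirF Γ R) (f : DirF Γ M) : DirF Γ M :=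
  fun n => ∑ᶠ p ∈ {p : Γ × Γ | p.1 * p.2 = n}, α p.1 • f p.2

/-!
Both sides of the Leibniz rule are finite sums over the factorizations `n = x * y`, so it suffices
to compare them term by term. For one term this is the Leibniz rule of `D` together with
`δ (x * y) = δ x + δ y`; the second convolution is reindexed by `(x, y) ↦ (y, x)`, which is where
commutativity of `Γ` enters.
-/

section TwistedDeriv

variable {A Γ R M : Type*}

/-- The map `D̃` of the paper. -/
def twistedDeriv [Semiring R] [AddCommMonoid M] [Module R M] (D : R → M) (δ : Γ → M)
    (α : DirF Γ R) : DirF Γ M :=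
  fun n => D (α n) + α n • δ n

section Linearity

variable [Semiring R] [AddCommMonoid M] [Module R M] {D : R → M} (δ : Γ → M)

theorem twistedDeriv_add (hDadd : ∀ r s : R, D (r + s) = D r + D s) (α β : DirF Γ R) :
    twistedDeriv D δ (fun n => α n + β n) =
      fun n => twistedDeriv D δ α n + twistedDeriv D δ β n := by
  funext n
  simp only [twistedDeriv, hDadd, add_smul]
  abel

theorem twistedDeriv_smul [Monoid A] [SMul A R] [DistribMulAction A M] [IsScalarTower A R M]
    (hDlin : ∀ (a : A) (r : R), D (a • r) = a • D r) (a : A) (α : DirF Γ R) :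
    twistedDeriv D δ (fun n => a • α n) = fun n => a • twistedDeriv D δ α n := by
  funext n
  simp only [twistedDeriv, hDlin, smul_assoc, smul_add]

end Linearity

theorem dsmul_apply_eq_finsum_swap [CommMagma Γ] [Semiring R] [AddCommMonoid M] [Module R M]
    (β : DirF Γ R) (f : DirF Γ M) (n : Γ) :
    dsmul β f n = ∑ᶠ p ∈ {p : Γ × Γ | p.1 * p.2 = n}, β p.2 • f p.1 := by
  refine finsum_mem_eq_of_bijOn Prod.swap ⟨?_, Prod.swap_injective.injOn, ?_⟩ fun _ _ => rfl
  · rintro ⟨x, y⟩ (h : x * y = n)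
    exact (mul_comm y x).trans h
  · rintro ⟨x, y⟩ (h : x * y = n)
    exact ⟨(y, x), (mul_comm y x).trans h, rfl⟩

section Leibniz

variable [CommSemiring R] [AddCommGroup M] [Module R M] {D : R → M} {δ : Γ → M}

theorem twistedDeriv_leibniz_term [Mul Γ] (hDleib : ∀ r s : R, D (r * s) = r • D s + s • D r)
    (hδmul : ∀ x y : Γ, δ (x * y) = δ x + δ y) (r s : R) (x y : Γ) :
    D (r * s) + (r * s) • δ (x * y) = r • (D s + s • δ y) + s • (D r + r • δ x) := by
  rw [hDleib, hδmul]
  simp only [smul_add, smul_smul, mul_comm s r]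
  abel

theorem twistedDeriv_dconv [CommMagma Γ] (hfin : FiniteMulType Γ)
    (hDadd : ∀ r s : R, D (r + s) = D r + D s) (hDleib : ∀ r s : R, D (r * s) = r • D s + s • D r)
    (hδmul : ∀ x y : Γ, δ (x * y) = δ x + δ y) (α β : DirF Γ R) :
    twistedDeriv D δ (dconv α β) =
      fun n => dsmul α (twistedDeriv D δ β) n + dsmul β (twistedDeriv D δ α) n := by
  funext n
  have hs := hfin n
  let D' : R →+ M := AddMonoidHom.mk' D hDadd
  let smulδ : R →+ M := (LinearMap.toSpanSingleton R M (δ n)).toAddMonoidHom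
  calc twistedDeriv D δ (dconv α β) n
      = D' (dconv α β n) + smulδ (dconv α β n) := rfl
    _ = ∑ᶠ p ∈ {p : Γ × Γ | p.1 * p.2 = n},
          (D (α p.1 * β p.2) + (α p.1 * β p.2) • δ (p.1 * p.2)) := by
      rw [dconv, D'.map_finsum_mem _ hs, smulδ.map_finsum_mem _ hs,
        ← finsum_mem_add_distrib hs]
      refine finsum_mem_congr rfl fun p (hp : p.1 * p.2 = n) => ?_
      rw [hp]
      rfl
    _ = ∑ᶠ p ∈ {p : Γ × Γ | p.1 * p.2 = n},
          (α p.1 • twistedDeriv D δ β p.2 + β p.2 • twistedDeriv D δ α p.1) :=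
      finsum_mem_congr rfl fun p _ => twistedDeriv_leibniz_term hDleib hδmul _ _ _ _
    _ = dsmul α (twistedDeriv D δ β) n + dsmul β (twistedDeriv D δ α) n := by
      rw [finsum_mem_add_distrib hs, dsmul_apply_eq_finsum_swap β, dsmul]

end Leibniz

end TwistedDeriv

theorem stmt7_general {A R M Γ : Type*} [CommRing A] [CommRing R] [Algebra A R]
    [AddCommGroup M] [Module R M] [Module A M] [IsScalarTower A R M]
    [CommMonoid Γ] (hfin : FiniteMulType Γ)
    (D : R → M)
    (hDadd : ∀ r s : R, D (r + s) = D r + D s)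
    (hDlin : ∀ (a : A) (r : R), D (a • r) = a • D r)
    (hDleib : ∀ r s : R, D (r * s) = r • D s + s • D r)
    (δ : Γ → M) (hδmul : ∀ a b : Γ, δ (a * b) = δ a + δ b) :
    ∀ Dt : DirF Γ R → DirF Γ M,
      (Dt = fun α => fun n => D (α n) + α n • δ n) →
      (∀ α β : DirF Γ R, Dt (fun n => α n + β n) = fun n => Dt α n + Dt β n) ∧
      (∀ (a : A) (α : DirF Γ R), Dt (fun n => a • α n) = fun n => a • Dt α n) ∧
      (∀ α β : DirF Γ R,
        Dt (dconv α β) = fun n => dsmul α (Dt β) n + dsmul β (Dt α) n) := by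
  rintro Dt rfl
  exact ⟨twistedDeriv_add δ hDadd, twistedDeriv_smul δ hDlin,
    twistedDeriv_dconv hfin hDadd hDleib hδmul⟩

/-- Given an `A`-derivation `D : R → M` and a monoid morphism `δ : (Γ,·) → (M,+)`, the map
`D̃(α)(n) = D(α(n)) + α(n)·δ(n)` is an `A`-derivation `F(Γ,R) → F(Γ,M)`: it is additive,
`A`-linear, and satisfies the Leibniz rule w.r.t. Dirichlet convolution. -/
theorem stmt7 {A R M Γ : Type*} [CommRing A] [CommRing R] [Algebra A R]
    [AddCommGroup M] [Module R M] [Module A M] [IsScalarTower A R M]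
    [CommMonoid Γ] (hfin : FiniteMulType Γ)
    (D : R → M)
    (hDadd : ∀ r s : R, D (r + s) = D r + D s)
    (hDlin : ∀ (a : A) (r : R), D (a • r) = a • D r)
    (hDleib : ∀ r s : R, D (r * s) = r • D s + s • D r)
    (δ : Γ → M) (hδ1 : δ 1 = 0) (hδmul : ∀ a b : Γ, δ (a * b) = δ a + δ b) :
    ∀ Dt : DirF Γ R → DirF Γ M,
      (Dt = fun α => fun n => D (α n) + α n • δ n) →
      (∀ α β : DirF Γ R, Dt (fun n => α n + β n) = fun n => Dt α n + Dt β n) ∧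
      (∀ (a : A) (α : DirF Γ R), Dt (fun n => a • α n) = fun n => a • Dt α n) ∧
      (∀ α β : DirF Γ R,
        Dt (dconv α β) = fun n => dsmul α (Dt β) n + dsmul β (Dt α) n) :=
  stmt7_general hfin D hDadd hDlin hDleib δ hδmul
end

section
/- The Dirichlet convolution ring F(ℕ*,R) is isomorphic as an R-algebra to the inverse limit of the rings F(Γ(k),R) under restriction maps, and hence to the power series ring R[[x₁, x₂, x₃, ...]] in countably many variables. -/
/-- `Γ(k)`: the submonoid of `(ℕ*,·)` generated by the first `k` primes. -/
def GammaK (k : ℕ) : Submonoid ℕ+ :=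
  Submonoid.closure {p : ℕ+ | ∃ i : Fin k, (p : ℕ) = Nat.nth Nat.Prime i}

/-- Restriction `F(ℕ*,R) → F(Γ(k),R)`. -/
def resK {R : Type*} (k : ℕ) (α : DirF ℕ+ R) : DirF (GammaK k) R := fun n => α (n : ℕ+)

/-!
By unique factorization, `d ↦ ∏ pᵢ ^ dᵢ` is a monoid isomorphism from `ℕ →₀ ℕ` onto `ℕ*`.
Transported along it, Dirichlet convolution becomes the Cauchy product of coefficients of power
series in the variables `xᵢ ↔ pᵢ`. Independently, the `Γ(k)` increase and exhaust `ℕ*`, so a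
function on `ℕ*` is the same as a compatible family of functions on the `Γ(k)`.
-/

open Function Finset Multiplicative

section InverseLimit

variable {ι X A R : Type*} [SetLike A X] {S : ι → A}

theorem restrict_injective_of_cover (hS : ∀ x, ∃ i, x ∈ S i) :
    Injective (fun (α : X → R) i (x : S i) => α x) := by
  intro α β hαβ
  funext x
  obtain ⟨i, hi⟩ := hS x
  exact congrFun (congrFun hαβ i) ⟨x, hi⟩

theorem range_restrict_of_monotone_cover [Preorder ι] [IsDirected ι (· ≤ ·)]
    (hmono : Monotone fun i => (S i : Set X)) (hS : ∀ x, ∃ i, x ∈ S i) :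
    Set.range (fun (α : X → R) i (x : S i) => α x) =
      {f : (i : ι) → S i → R |
        ∀ i j, i ≤ j → ∀ (n : S i) (m : S j), (n : X) = m → f i n = f j m} := by
  ext f
  constructor
  · rintro ⟨α, rfl⟩ i j - n m hnm
    exact congrArg α hnm
  · intro hf
    choose K hK using hS
    refine ⟨fun x => f (K x) ⟨x, hK x⟩, funext fun i => funext fun x => ?_⟩
    obtain ⟨j, hKj, hij⟩ := directed_of (· ≤ ·) (K x) i
    exact (hf _ j hKj _ ⟨x, hmono hKj (hK x)⟩ rfl).trans
      (hf i j hij x ⟨x, hmono hij x.2⟩ rfl).symm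

end InverseLimit

section PowerSeries

variable {σ Γ R : Type*}

theorem dconv_mulEquiv_apply [DecidableEq σ] [Mul Γ] [NonUnitalNonAssocSemiring R]
    (e : Multiplicative (σ →₀ ℕ) ≃* Γ) (α β : DirF Γ R) (d : σ →₀ ℕ) :
    dconv α β (e (ofAdd d)) = ∑ p ∈ antidiagonal d, α (e (ofAdd p.1)) * β (e (ofAdd p.2)) := by
  let g : (σ →₀ ℕ) × (σ →₀ ℕ) → Γ × Γ := Prod.map (e ∘ ofAdd) (e ∘ ofAdd)
  have hg : Injective g :=
    Prod.map_injective.2 ⟨e.injective.comp ofAdd.injective, e.injective.comp ofAdd.injective⟩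
  have hfactorizations : {p : Γ × Γ | p.1 * p.2 = e (ofAdd d)} = g '' (antidiagonal d : Set _) := by
    ext ⟨x, y⟩
    constructor
    · intro hxy
      refine ⟨(toAdd (e.symm x), toAdd (e.symm y)), ?_, by simp [g]⟩
      rw [Finset.mem_coe, HasAntidiagonal.mem_antidiagonal, ← toAdd_mul, ← map_mul, hxy]
      simp
    · rintro ⟨⟨a, b⟩, hab, hxy⟩
      obtain ⟨rfl, rfl⟩ := Prod.ext_iff.1 hxy
      rw [Finset.mem_coe, HasAntidiagonal.mem_antidiagonal] at hab
      simp [g, ← map_mul, ← ofAdd_add, hab]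
  rw [dconv, hfactorizations, finsum_mem_image hg.injOn, finsum_mem_coe_finset]
  rfl

noncomputable def IsDirichletRing.ringEquivMvPowerSeries [Monoid Γ] [Ring R]
    {inst : Ring (DirF Γ R)} (h : IsDirichletRing inst) (e : Multiplicative (σ →₀ ℕ) ≃* Γ) :
    DirF Γ R ≃+* MvPowerSeries σ R :=
  letI := inst
  { toFun α d := α (e (ofAdd d))
    invFun F n := F (toAdd (e.symm n))
    left_inv α := funext fun n => by simp
    right_inv F := funext fun d => by simp
    map_add' α β := funext fun d => h.1 α β _
    map_mul' α β := funext fun d => by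
      classical
      rw [h.2.1, dconv_mulEquiv_apply]
      exact (MvPowerSeries.coeff_mul d (φ := fun d => α (e (ofAdd d)))
        (ψ := fun d => β (e (ofAdd d)))).symm }

theorem IsDirichletRing.coeff_ringEquivMvPowerSeries [Monoid Γ] [Ring R]
    {inst : Ring (DirF Γ R)} (h : IsDirichletRing inst) (e : Multiplicative (σ →₀ ℕ) ≃* Γ)
    (α : DirF Γ R) (d : σ →₀ ℕ) :
    MvPowerSeries.coeff d (h.ringEquivMvPowerSeries e α) = α (e (ofAdd d)) :=
  rfl

end PowerSeries

section Primes

open Nat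

/-- The `i`-th prime, counting from `nthPrimePNat 0 = 2`. -/
noncomputable def nthPrimePNat (i : ℕ) : ℕ+ := ⟨nth Nat.Prime i, (prime_nth_prime i).pos⟩

noncomputable def primePowProd : Multiplicative (ℕ →₀ ℕ) →* ℕ+ where
  toFun d := (toAdd d).prod fun i k => nthPrimePNat i ^ k
  map_one' := Finsupp.prod_zero_index
  map_mul' _ _ := Finsupp.prod_add_index' (fun _ => pow_zero _) fun _ _ _ => pow_add _ _ _

theorem coe_primePowProd (d : ℕ →₀ ℕ) :
    (primePowProd (ofAdd d) : ℕ) = d.prod fun i k => nth Nat.Prime i ^ k := by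
  simp only [primePowProd, MonoidHom.coe_mk, OneHom.coe_mk, toAdd_ofAdd, Finsupp.prod,
    PNat.coe_prod, PNat.pow_coe]
  rfl

theorem factorization_primePowProd (d : ℕ →₀ ℕ) :
    (primePowProd (ofAdd d) : ℕ).factorization = d.mapDomain (nth Nat.Prime) := by
  classical
  rw [coe_primePowProd,
    ← Finsupp.prod_mapDomain_index (f := nth Nat.Prime) (h := (· ^ ·)) (fun _ => pow_zero _)
      fun _ _ _ => pow_add _ _ _]
  refine prod_pow_factorization_eq_self fun p hp => ?_
  obtain ⟨i, -, rfl⟩ := Finset.mem_image.1 (Finsupp.mapDomain_support hp)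
  exact prime_nth_prime i

theorem primePowProd_injective : Injective primePowProd := fun a b hab =>
  toAdd.injective <| Finsupp.mapDomain_injective (nth_injective (p := Nat.Prime)
    infinite_setOfPred_prime) <| by
    rw [← factorization_primePowProd, ← factorization_primePowProd, ofAdd_toAdd, ofAdd_toAdd, hab]

theorem primePowProd_surjective : Surjective primePowProd := by
  suffices h : ∀ n (hn : 0 < n), (⟨n, hn⟩ : ℕ+) ∈ MonoidHom.mrange primePowProd from
    fun n => h n n.pos
  refine induction_on_primes (by simp) (fun _ => one_mem _) fun p a hp ha hpa => ?_
  have hp_mem : (⟨p, hp.pos⟩ : ℕ+) ∈ MonoidHom.mrange primePowProd :=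
    ⟨ofAdd (Finsupp.single (count Nat.Prime p) 1), PNat.eq <| by
      simp [coe_primePowProd, nth_count hp]⟩
  exact mul_mem hp_mem (ha (Nat.pos_of_mul_pos_left hpa))

noncomputable def primePowMulEquiv : Multiplicative (ℕ →₀ ℕ) ≃* ℕ+ :=
  .ofBijective primePowProd ⟨primePowProd_injective, primePowProd_surjective⟩

theorem nthPrimePNat_mem_gammaK {i k : ℕ} (h : i < k) : nthPrimePNat i ∈ GammaK k :=
  Submonoid.subset_closure ⟨⟨i, h⟩, rfl⟩

theorem primePowProd_mem_gammaK {d : ℕ →₀ ℕ} {k : ℕ} (hd : ∀ i ∈ d.support, i < k) :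
    primePowProd (ofAdd d) ∈ GammaK k :=
  SubmonoidClass.finsuppProd_mem _ d _ fun i hi =>
    pow_mem (nthPrimePNat_mem_gammaK (hd i (Finsupp.mem_support_iff.2 hi))) _

theorem exists_mem_gammaK (n : ℕ+) : ∃ k, n ∈ GammaK k := by
  obtain ⟨d, rfl⟩ := primePowProd_surjective n
  exact ⟨(toAdd d).support.sup id + 1,
    primePowProd_mem_gammaK fun i hi => Nat.lt_succ_of_le (Finset.le_sup (f := id) hi)⟩

theorem gammaK_mono : Monotone GammaK := fun _ _ h =>
  Submonoid.closure_mono fun _ ⟨i, hi⟩ => ⟨Fin.castLE h i, hi⟩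

end Primes

/-- `F(ℕ*,R)` is the inverse limit of the rings `F(Γ(k),R)` under the restriction maps
(the map to compatible families is a bijection onto the inverse limit), and `F(ℕ*,R)` is
isomorphic as an `R`-algebra to the power-series ring `R[[x₁,x₂,x₃,...]]` in countably
many variables. -/
theorem stmt13 {R : Type*} [CommRing R]
    [instF : CommRing (DirF ℕ+ R)] (h : IsDirichletRing instF.toRing) :
    (Function.Injective (fun (α : DirF ℕ+ R) => fun k : ℕ => resK k α) ∧
      Set.range (fun (α : DirF ℕ+ R) => fun k : ℕ => resK k α)
        = {f : (k : ℕ) → DirF (GammaK k) R |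
            ∀ (k k' : ℕ), k ≤ k' → ∀ (n : GammaK k) (m : GammaK k'),
              (n : ℕ+) = (m : ℕ+) → f k n = f k' m}) ∧
    ∃ e : DirF ℕ+ R ≃+* MvPowerSeries ℕ R,
      ∀ (α : DirF ℕ+ R) (d : ℕ →₀ ℕ) (n : ℕ+),
        (n : ℕ) = ∏ i ∈ d.support, (Nat.nth Nat.Prime i) ^ (d i) →
        MvPowerSeries.coeff d (e α) = α n := by
  refine ⟨⟨restrict_injective_of_cover exists_mem_gammaK,
    range_restrict_of_monotone_cover (fun _ _ hkk' => gammaK_mono hkk') exists_mem_gammaK⟩,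
    h.ringEquivMvPowerSeries primePowMulEquiv, fun α d n hn => ?_⟩
  rw [IsDirichletRing.coeff_ringEquivMvPowerSeries]
  congr
  exact PNat.eq ((coe_primePowProd d).trans hn.symm)
end

section
/- Let p be a prime and v_p(n) the p-adic valuation of n. Given an A-derivation D : R → R, the map D̃_p : F(ℕ*,R) → F(ℕ*,R) defined by D̃_p(α)(n) = D(α(n)) + α(np)·v_p(np) is an A-derivation of the Dirichlet convolution ring F(ℕ*,R). -/
/-! The operator splits as `α ↦ D ∘ α` plus `α ↦ (n ↦ v_p(np) • α(np))`. The first is a derivation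
because `D` is. For the second, weighting by an additive function `w` (here `v_p`) is a derivation
of Dirichlet convolution, as `w(ab) = w(a) + w(b)` on every factorization `ab = m`; and since
`v_p(m) • α(m)` vanishes unless `p ∣ m`, evaluating such a convolution at `np` is the same as
convolving the shifted function `m ↦ v_p(mp) • α(mp)` at `n`. -/

section Dirichlet

variable {Γ R : Type*}

theorem dconv_comm [CommMagma Γ] [NonUnitalNonAssocCommSemiring R] (α β : DirF Γ R) :
    dconv α β = dconv β α := by
  funext n
  refine finsum_mem_eq_of_bijOn Prod.swap ⟨fun q hq => ?_, Prod.swap_injective.injOn,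
    fun q hq => ⟨q.swap, ?_, q.swap_swap⟩⟩ fun q _ => mul_comm _ _ <;>
  simpa only [Set.mem_ofPred_eq, Prod.fst_swap, Prod.snd_swap, mul_comm] using hq

variable [Mul Γ] [NonUnitalNonAssocSemiring R] (hΓ : FiniteMulType Γ)
include hΓ

theorem dconv_add_left (f g β : DirF Γ R) (n : Γ) :
    dconv (fun m => f m + g m) β n = dconv f β n + dconv g β n := by
  simp only [dconv, add_mul]
  exact finsum_mem_add_distrib (hΓ n)

theorem dconv_add_right (α f g : DirF Γ R) (n : Γ) :
    dconv α (fun m => f m + g m) n = dconv α f n + dconv α g n := by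
  simp only [dconv, mul_add]
  exact finsum_mem_add_distrib (hΓ n)

theorem map_dconv_of_leibniz (D : R →+ R) (hD : ∀ r s, D (r * s) = D r * s + r * D s)
    (α β : DirF Γ R) (n : Γ) :
    D (dconv α β n) = dconv (fun m => D (α m)) β n + dconv α (fun m => D (β m)) n := by
  unfold dconv
  rw [AddMonoidHom.map_finsum_mem (fun q : Γ × Γ => α q.1 * β q.2) D (hΓ n),
    ← finsum_mem_add_distrib (hΓ n)]
  exact finsum_mem_congr rfl fun q _ => hD _ _

theorem smul_dconv_of_add (w : Γ → ℕ) (hw : ∀ a b, w (a * b) = w a + w b) (α β : DirF Γ R)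
    (n : Γ) :
    w n • dconv α β n = dconv (fun m => w m • α m) β n + dconv α (fun m => w m • β m) n := by
  unfold dconv
  rw [smul_finsum_mem (hΓ n), ← finsum_mem_add_distrib (hΓ n)]
  refine finsum_mem_congr rfl fun q (hq : q.1 * q.2 = n) => ?_
  rw [← hq, hw, add_smul, smul_mul_assoc, mul_smul_comm]

end Dirichlet

theorem dconv_apply_mul_of_dvd_left {Γ R : Type*} [CancelCommMonoid Γ]
    [NonUnitalNonAssocSemiring R] (p : Γ) (γ β : DirF Γ R) (hγ : ∀ m, γ m ≠ 0 → p ∣ m) (n : Γ) :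
    dconv γ β (n * p) = dconv (fun m => γ (m * p)) β n := by
  have hinj : Set.InjOn (fun q : Γ × Γ => (q.1 * p, q.2)) {q | q.1 * q.2 = n} :=
    fun _ _ _ _ h => by
      simp only [Prod.mk.injEq] at h
      exact Prod.ext (mul_right_cancel h.1) h.2
  unfold dconv
  rw [← finsum_mem_image (f := fun q => γ q.1 * β q.2) hinj]
  refine finsum_mem_inter_support_eq' _ _ _ fun q hq => ?_
  obtain ⟨c, hc⟩ := hγ q.1 (left_ne_zero_of_mul hq)
  simp only [Set.mem_ofPred_eq, Set.mem_image, Prod.ext_iff]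
  constructor
  · intro h
    refine ⟨(c, q.2), mul_right_cancel (b := p) ?_, ?_, rfl⟩
    · rw [← h, hc, mul_right_comm, mul_comm p]
    · rw [hc, mul_comm]
  · rintro ⟨⟨a, b⟩, hab, h1, h2⟩
    rw [← h1, ← h2, ← hab, mul_right_comm]

theorem dconv_apply_mul_of_dvd_right {Γ R : Type*} [CancelCommMonoid Γ]
    [NonUnitalNonAssocCommSemiring R] (p : Γ) (β γ : DirF Γ R) (hγ : ∀ m, γ m ≠ 0 → p ∣ m)
    (n : Γ) : dconv β γ (n * p) = dconv β (fun m => γ (m * p)) n := by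
  calc dconv β γ (n * p) = dconv γ β (n * p) := congrFun (dconv_comm β γ) _
    _ = dconv (fun m => γ (m * p)) β n := dconv_apply_mul_of_dvd_left p γ β hγ n
    _ = dconv β (fun m => γ (m * p)) n := congrFun (dconv_comm _ _) n

namespace PNat

theorem finiteMulType : FiniteMulType ℕ+ := fun n => by
  refine (Set.finite_Iic n |>.prod (Set.finite_Iic n)).subset fun q (hq : q.1 * q.2 = n) => ?_
  exact ⟨PNat.le_of_dvd ⟨q.2, hq.symm⟩, PNat.le_of_dvd ⟨q.1, by rw [← hq, mul_comm]⟩⟩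

theorem padicValNat_mul (p : ℕ) [Fact p.Prime] (a b : ℕ+) :
    padicValNat p ((a * b : ℕ+) : ℕ) = padicValNat p a + padicValNat p b := by
  rw [PNat.mul_coe]
  exact padicValNat.mul a.ne_zero b.ne_zero

theorem dvd_of_padicValNat_smul_ne_zero {M : Type*} [AddMonoid M] {p m : ℕ+} {x : M}
    (h : padicValNat p m • x ≠ 0) : p ∣ m :=
  PNat.dvd_iff.mpr <|
    dvd_of_one_le_padicValNat (Nat.one_le_iff_ne_zero.mpr (left_ne_zero_of_smul h))

end PNat

theorem stmt14_general {A R : Type*} [CommRing A] [CommRing R] [Algebra A R]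
    (D : R → R)
    (hDadd : ∀ r s : R, D (r + s) = D r + D s)
    (hDlin : ∀ (a : A) (r : R), D (a • r) = a • D r)
    (hDleib : ∀ r s : R, D (r * s) = r * D s + s * D r)
    (p : ℕ+) (hp : (p : ℕ).Prime) :
    ∀ Dt : DirF ℕ+ R → DirF ℕ+ R,
      (Dt = fun α => fun n => D (α n) + padicValNat p ((n * p : ℕ+) : ℕ) • α (n * p)) →
      (∀ α β : DirF ℕ+ R, Dt (fun n => α n + β n) = fun n => Dt α n + Dt β n) ∧
      (∀ (a : A) (α : DirF ℕ+ R), Dt (fun n => a • α n) = fun n => a • Dt α n) ∧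
      (∀ α β : DirF ℕ+ R,
        Dt (dconv α β) = fun n => dconv (Dt α) β n + dconv α (Dt β) n) := by
  rintro Dt rfl
  have : Fact (p : ℕ).Prime := ⟨hp⟩
  have hΓ := PNat.finiteMulType
  refine ⟨fun α β => funext fun n => ?_, fun a α => funext fun n => ?_,
    fun α β => funext fun n => ?_⟩ <;> beta_reduce
  · simp only [hDadd, smul_add]
    abel
  · simp only [hDlin, smul_add, smul_comm _ a]
  · have hD := map_dconv_of_leibniz hΓ (AddMonoidHom.mk' D hDadd)
      (fun r s => by simp only [AddMonoidHom.mk'_apply, hDleib, add_comm, mul_comm]) α β n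
    simp only [AddMonoidHom.mk'_apply] at hD
    have hshift_left := dconv_apply_mul_of_dvd_left p (fun m : ℕ+ => padicValNat p m • α m) β
      (fun _ => PNat.dvd_of_padicValNat_smul_ne_zero) n
    have hshift_right := dconv_apply_mul_of_dvd_right p α (fun m : ℕ+ => padicValNat p m • β m)
      (fun _ => PNat.dvd_of_padicValNat_smul_ne_zero) n
    rw [hD, smul_dconv_of_add hΓ (fun m : ℕ+ => padicValNat p m) (PNat.padicValNat_mul p),
      hshift_left, hshift_right, add_add_add_comm]
    exact congrArg₂ (· + ·) (dconv_add_left hΓ _ _ β n).symm (dconv_add_right hΓ α _ _ n).symm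

/-- Given a prime `p` and an `A`-derivation `D : R → R`, the map
`D̃_p(α)(n) = D(α(n)) + v_p(np)·α(np)` is an `A`-derivation of the Dirichlet convolution
ring `F(ℕ*,R)`: additive, `A`-linear, and Leibniz for Dirichlet convolution. -/
theorem stmt14 {A R : Type*} [CommRing A] [IsDomain A] [CommRing R] [Algebra A R]
    (D : R → R)
    (hDadd : ∀ r s : R, D (r + s) = D r + D s)
    (hDlin : ∀ (a : A) (r : R), D (a • r) = a • D r)
    (hDleib : ∀ r s : R, D (r * s) = r * D s + s * D r)
    (p : ℕ+) (hp : (p : ℕ).Prime) :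
    ∀ Dt : DirF ℕ+ R → DirF ℕ+ R,
      (Dt = fun α => fun n => D (α n) + padicValNat p ((n * p : ℕ+) : ℕ) • α (n * p)) →
      (∀ α β : DirF ℕ+ R, Dt (fun n => α n + β n) = fun n => Dt α n + Dt β n) ∧
      (∀ (a : A) (α : DirF ℕ+ R), Dt (fun n => a • α n) = fun n => a • Dt α n) ∧
      (∀ α β : DirF ℕ+ R,
        Dt (dconv α β) = fun n => dconv (Dt α) β n + dconv α (Dt β) n) :=
  stmt14_general D hDadd hDlin hDleib p hp
end

section
/- The extension-by-zero map i_* : F(Γ,R) → F̃(G(Γ),R), i_*(α)(q) = α(q) if q ∈ Γ and 0 otherwise, is an injective R-algebra homomorphism, so F̃(G(Γ),R) is a ring extension of the Dirichlet convolution ring F(Γ,R). -/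
/-- `i : Γ →* G` realizes `G` as the Grothendieck group of the (cancellative) commutative
monoid `Γ`: `i` is injective and every element of `G` is a fraction `i(m)·i(n)⁻¹`. -/
def IsGrothendieckGroupOf {Γ G : Type*} [CommMonoid Γ] [CommGroup G] (i : Γ →* G) : Prop :=
  Function.Injective i ∧ ∀ g : G, ∃ m n : Γ, g = i m * (i n)⁻¹

/-- The carrier `F̃(G(Γ),R)`: functions `α : G(Γ) → R` such that for some `d ∈ Γ`,
`α(q) ≠ 0` implies `dq ∈ Γ`. -/
def DirFG {Γ G : Type*} [CommMonoid Γ] [CommGroup G] (i : Γ →* G) (R : Type*) [Zero R] :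
    Type _ :=
  {α : G → R // ∃ d : Γ, ∀ q : G, α q ≠ 0 → ∃ t : Γ, i d * q = i t}

/-- A `CommRing` structure on `F̃(G(Γ),R)` is *the* convolution one if addition is pointwise
and multiplication is convolution on `G`. -/
def IsDirichletRingExt {Γ G : Type*} [CommMonoid Γ] [CommGroup G] (i : Γ →* G)
    {R : Type*} [CommRing R] (inst : CommRing (DirFG i R)) : Prop := by
  letI := inst
  exact (∀ α β : DirFG i R, ∀ q : G, (α + β).val q = α.val q + β.val q) ∧
    (∀ α β : DirFG i R, (α * β).val = dconv α.val β.val) ∧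
    ((1 : DirFG i R).val 1 = 1 ∧ ∀ q : G, q ≠ 1 → (1 : DirFG i R).val q = 0)

/-- Extension by zero `i_* : F(Γ,R) → F̃(G(Γ),R)` is an injective `R`-algebra homomorphism,
so `F̃(G(Γ),R)` is a ring extension of the Dirichlet convolution ring `F(Γ,R)`. -/
theorem stmt17 {Γ G R : Type*} [CommMonoid Γ] [IsCancelMul Γ] [CommGroup G] [CommRing R]
    (hfin : FiniteMulType Γ) (i : Γ →* G) (hG : IsGrothendieckGroupOf i)
    [instF : CommRing (DirF Γ R)] (h : IsDirichletRing instF.toRing)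
    [instG : CommRing (DirFG i R)] (hExt : IsDirichletRingExt i instG) :
    ∃ iStar : DirF Γ R →+* DirFG i R,
      Function.Injective iStar ∧
      (∀ (α : DirF Γ R) (n : Γ), (iStar α).val (i n) = α n) ∧
      (∀ (α : DirF Γ R) (q : G), (∀ n : Γ, q ≠ i n) → (iStar α).val q = 0) ∧
      -- compatibility with the `R`-algebra structures:
      (∀ (jF : R →+* DirF Γ R) (jG : R →+* DirFG i R),
        ((∀ r : R, (jF r) 1 = r ∧ ∀ n : Γ, n ≠ 1 → (jF r) n = 0) ∧
         (∀ r : R, (jG r).val 1 = r ∧ ∀ q : G, q ≠ 1 → (jG r).val q = 0)) →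
        ∀ r : R, iStar (jF r) = jG r) := by

  classical
  obtain ⟨hinj, _⟩ := hG
  obtain ⟨haddF, hmulF, honeF1, honeF0⟩ := h
  obtain ⟨haddG, hmulG, honeG1, honeG0⟩ := hExt
  -- zero is pointwise zero in both rings
  have hzeroF : ∀ n : Γ, (0 : DirF Γ R) n = 0 := by
    intro n
    have h1 : ((0 : DirF Γ R) + 0) n = (0 : DirF Γ R) n + (0 : DirF Γ R) n := haddF 0 0 n
    rw [add_zero] at h1
    exact (left_eq_add.mp h1)
  have hzeroG : ∀ q : G, (0 : DirFG i R).val q = 0 := by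
    intro q
    have h1 : ((0 : DirFG i R) + 0).val q = (0 : DirFG i R).val q + (0 : DirFG i R).val q :=
      haddG 0 0 q
    rw [add_zero] at h1
    exact (left_eq_add.mp h1)
  -- the extension-by-zero function
  set extf : DirF Γ R → G → R :=
    fun α q => if hq : ∃ n : Γ, i n = q then α hq.choose else 0 with hextf
  have hext_i : ∀ (α : DirF Γ R) (n : Γ), extf α (i n) = α n := by
    intro α n
    have hq : ∃ m : Γ, i m = i n := ⟨n, rfl⟩
    simp only [hextf, dif_pos hq]
    congr 1
    exact hinj hq.choose_spec
  have hext_no : ∀ (α : DirF Γ R) (q : G), (∀ n : Γ, q ≠ i n) → extf α q = 0 := by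
    intro α q hq
    have : ¬ ∃ n : Γ, i n = q := by
      rintro ⟨n, rfl⟩; exact hq n rfl
    simp only [hextf, dif_neg this]
  have hext_ne : ∀ (α : DirF Γ R) (q : G), extf α q ≠ 0 → ∃ n : Γ, i n = q := by
    intro α q hne
    by_contra hc
    exact hne (by simp only [hextf, dif_neg hc])
  have hmem : ∀ α : DirF Γ R, ∃ d : Γ, ∀ q : G, extf α q ≠ 0 → ∃ t : Γ, i d * q = i t := by
    intro α
    refine ⟨1, fun q hq => ?_⟩
    obtain ⟨n, rfl⟩ := hext_ne α q hq
    exact ⟨n, by rw [map_one, one_mul]⟩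
  set E : DirF Γ R → DirFG i R := fun α => ⟨extf α, hmem α⟩ with hE
  -- key convolution compatibility
  have key : ∀ α β : DirF Γ R, dconv (extf α) (extf β) = extf (dconv α β) := by
    intro α β
    funext q
    set f : G × G → R := fun p => extf α p.1 * extf β p.2 with hf
    by_cases hq : ∃ n : Γ, i n = q
    · obtain ⟨n, rfl⟩ := hq
      set g : Γ × Γ → G × G := fun p => (i p.1, i p.2) with hg
      have hginj : Function.Injective g := by
        intro p p' hpp
        have h1 : i p.1 = i p'.1 := congrArg Prod.fst hpp
        have h2 : i p.2 = i p'.2 := congrArg Prod.snd hpp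
        exact Prod.ext (hinj h1) (hinj h2)
      have hsets : {p : G × G | p.1 * p.2 = i n} ∩ Function.support f
          = (g '' {p : Γ × Γ | p.1 * p.2 = n}) ∩ Function.support f := by
        ext p
        simp only [Set.mem_inter_iff, Set.mem_setOf_eq, Function.mem_support]
        constructor
        · rintro ⟨hp, hfp⟩
          have h1 : extf α p.1 ≠ 0 := fun hz => hfp (by rw [hf]; simp [hz])
          have h2 : extf β p.2 ≠ 0 := fun hz => hfp (by rw [hf]; simp [hz])
          obtain ⟨a, ha⟩ := hext_ne α p.1 h1
          obtain ⟨b, hb⟩ := hext_ne β p.2 h2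
          have hab : a * b = n := by
            apply hinj
            rw [map_mul, ha, hb, hp]
          exact ⟨⟨⟨a, b⟩, hab, by rw [hg]; exact Prod.ext ha hb⟩, hfp⟩
        · rintro ⟨⟨⟨a, b⟩, hab, rfl⟩, hfp⟩
          refine ⟨?_, hfp⟩
          show i a * i b = i n
          rw [← map_mul, hab]
      calc ∑ᶠ p ∈ {p : G × G | p.1 * p.2 = i n}, f p
          = ∑ᶠ p ∈ ({p : G × G | p.1 * p.2 = i n} ∩ Function.support f), f p :=
            (finsum_mem_inter_support f _).symm
        _ = ∑ᶠ p ∈ ((g '' {p : Γ × Γ | p.1 * p.2 = n}) ∩ Function.support f), f p := by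
            rw [hsets]
        _ = ∑ᶠ p ∈ (g '' {p : Γ × Γ | p.1 * p.2 = n}), f p :=
            finsum_mem_inter_support f _
        _ = ∑ᶠ p ∈ {p : Γ × Γ | p.1 * p.2 = n}, f (g p) :=
            finsum_mem_image (hginj.injOn)
        _ = ∑ᶠ p ∈ {p : Γ × Γ | p.1 * p.2 = n}, α p.1 * β p.2 :=
            finsum_mem_congr rfl (fun p _ => by
              simp only [hf, hg]; rw [hext_i, hext_i])
        _ = extf (dconv α β) (i n) := (hext_i (dconv α β) n).symm
    · have hR : extf (dconv α β) q = 0 := by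
        simp only [hextf, dif_neg hq]
      rw [hR]
      apply finsum_mem_of_eqOn_zero
      intro p hp
      by_contra hfp
      have h1 : extf α p.1 ≠ 0 := fun hz => hfp (show extf α p.1 * extf β p.2 = (0 : G × G → R) p by simp [hz])
      have h2 : extf β p.2 ≠ 0 := fun hz => hfp (show extf α p.1 * extf β p.2 = (0 : G × G → R) p by simp [hz])
      obtain ⟨a, ha⟩ := hext_ne α p.1 h1
      obtain ⟨b, hb⟩ := hext_ne β p.2 h2
      exact hq ⟨a * b, by rw [map_mul, ha, hb]; exact hp⟩
  -- E is a ring hom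
  have hEone : E 1 = 1 := by
    apply Subtype.ext
    funext q
    show extf 1 q = (1 : DirFG i R).val q
    by_cases hq : ∃ n : Γ, i n = q
    · obtain ⟨n, rfl⟩ := hq
      rw [hext_i]
      by_cases hn : n = 1
      · subst hn; rw [honeF1, map_one, honeG1]
      · rw [honeF0 n hn, honeG0 (i n) (fun h1 => hn (hinj (by rw [h1, map_one])))]
    · rw [hext_no _ _ (fun n h1 => hq ⟨n, h1.symm⟩)]
      rw [honeG0 q (fun h1 => hq ⟨1, by rw [map_one, h1]⟩)]
  have hEmul : ∀ α β : DirF Γ R, E (α * β) = E α * E β := by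
    intro α β
    apply Subtype.ext
    rw [hmulG]
    show extf (α * β) = dconv (extf α) (extf β)
    rw [hmulF, key]
  have hEzero : E 0 = 0 := by
    apply Subtype.ext
    funext q
    show extf 0 q = (0 : DirFG i R).val q
    rw [hzeroG]
    by_cases hq : ∃ n : Γ, i n = q
    · obtain ⟨n, rfl⟩ := hq; rw [hext_i, hzeroF]
    · simp only [hextf, dif_neg hq]
  have hEadd : ∀ α β : DirF Γ R, E (α + β) = E α + E β := by
    intro α β
    apply Subtype.ext
    funext q
    show extf (α + β) q = (E α + E β).val q
    rw [haddG]
    show _ = extf α q + extf β q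
    by_cases hq : ∃ n : Γ, i n = q
    · obtain ⟨n, rfl⟩ := hq
      rw [hext_i, hext_i, hext_i, haddF]
    · simp only [hextf, dif_neg hq, add_zero]
  refine ⟨⟨⟨⟨E, hEone⟩, hEmul⟩, hEzero, hEadd⟩, ?_, ?_, ?_, ?_⟩
  · intro α β hab
    funext n
    have h2 : extf α (i n) = extf β (i n) :=
      congrArg (fun x : DirFG i R => x.val (i n)) hab
    rw [hext_i, hext_i] at h2
    exact h2
  · intro α n
    exact hext_i α n
  · intro α q hq
    exact hext_no α q hq
  · rintro jF jG ⟨hjF, hjG⟩ r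
    apply Subtype.ext
    funext q
    show extf (jF r) q = (jG r).val q
    by_cases hq : ∃ n : Γ, i n = q
    · obtain ⟨n, rfl⟩ := hq
      rw [hext_i]
      by_cases hn : n = 1
      · subst hn; rw [(hjF r).1, map_one, (hjG r).1]
      · rw [(hjF r).2 n hn,
          (hjG r).2 (i n) (fun h1 => hn (hinj (by rw [h1, map_one])))]
    · rw [hext_no _ _ (fun n h1 => hq ⟨n, h1.symm⟩),
        (hjG r).2 q (fun h1 => hq ⟨1, by rw [map_one, h1]⟩)]
end

section
/- There is an R-algebra isomorphism F̃(ℚ₊*,R) ≅ R[[x₁,x₂,...]][x₁⁻¹,x₂⁻¹,...], where a function α ∈ F̃(ℚ₊*,R) maps to Σ_{q ∈ ℚ₊*} α(q)q^x with q^x := x₁^{a₁}⋯x_r^{a_r} for q = p₁^{a₁}⋯p_r^{a_r} (aᵢ ∈ ℤ). -/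
/-- The multiplicative group `ℚ₊*` of positive rationals. -/
def Qpos : Type := {q : ℚ // 0 < q}

instance : CommGroup Qpos := by unfold Qpos; infer_instance

/-- The carrier `F̃(ℚ₊*,R)`: functions `α : ℚ₊* → R` such that for some `d ∈ ℕ*`,
`α(q) ≠ 0` implies `dq ∈ ℕ*`. -/
def DirFQ (R : Type*) [Zero R] : Type _ :=
  {α : Qpos → R // ∃ d : ℕ+, ∀ q : Qpos, α q ≠ 0 → ∃ n : ℕ+, (d : ℚ) * q.val = (n : ℚ)}

/-- A `CommRing` structure on `F̃(ℚ₊*,R)` is *the* convolution one if addition is pointwise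
and multiplication is convolution on `ℚ₊*`. -/
def IsDirichletRingQ {R : Type*} [CommRing R] (inst : CommRing (DirFQ R)) : Prop := by
  letI := inst
  exact (∀ α β : DirFQ R, ∀ q : Qpos, (α + β).val q = α.val q + β.val q) ∧
    (∀ α β : DirFQ R, (α * β).val = dconv α.val β.val) ∧
    ((1 : DirFQ R).val 1 = 1 ∧ ∀ q : Qpos, q ≠ 1 → (1 : DirFQ R).val q = 0)

/-- The multiplicative set of monomials in `R[[x₁,x₂,...]]`. -/
noncomputable def monomialSubmonoid (R : Type*) [CommRing R] : Submonoid (MvPowerSeries ℕ R) :=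
  Submonoid.closure (Set.range (MvPowerSeries.X : ℕ → MvPowerSeries ℕ R))

/-!
Identify `ℕ*` with `ℕ →₀ ℕ` by prime factorisation, `m ↦ pᵐ = ∏ pᵢ ^ mᵢ`. If `pᵈ · q ∈ ℕ*` for
every `q` in the support of `α`, then `α` is recorded by the power series `Σₘ α (pᵐ / pᵈ) xᵐ`, and
`α ↦ (Σₘ α (pᵐ / pᵈ) xᵐ) / xᵈ` does not depend on `d`, since raising `d` by `e` multiplies numerator
and denominator by `xᵉ`. Over a common denominator sums go to sums, and convolution goes to the
Cauchy product because `pᵃ / pᵈ · pᵇ / pᵉ = pᵃ⁺ᵇ / pᵈ⁺ᵉ`. Monomials are non-zero-divisors, which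
gives injectivity, and `F / xᵘ` is the image of `pᵐ / pᵘ ↦ coeff m F`.
-/

namespace DirichletQ

open MvPowerSeries
open scoped nonZeroDivisors
open Finset.HasAntidiagonal (antidiagonal mem_antidiagonal)

noncomputable def primeProd (m : ℕ →₀ ℕ) : ℕ := m.prod fun i k => Nat.nth Nat.Prime i ^ k

lemma primeProd_add (a b : ℕ →₀ ℕ) : primeProd (a + b) = primeProd a * primeProd b :=
  Finsupp.prod_add_index' (fun _ => pow_zero _) fun _ _ _ => pow_add _ _ _

lemma primeProd_pos (m : ℕ →₀ ℕ) : 0 < primeProd m :=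
  Finset.prod_pos fun i _ => pow_pos (Nat.prime_nth_prime i).pos _

lemma primeProd_eq_prod_pow_mapDomain (m : ℕ →₀ ℕ) :
    primeProd m = (m.mapDomain (Nat.nth Nat.Prime)).prod (· ^ ·) :=
  (Finsupp.prod_mapDomain_index (h := fun a k => a ^ k) (fun _ => pow_zero _)
    fun _ _ _ => pow_add _ _ _).symm

lemma factorization_primeProd (m : ℕ →₀ ℕ) :
    (primeProd m).factorization = m.mapDomain (Nat.nth Nat.Prime) := by
  rw [primeProd_eq_prod_pow_mapDomain]
  refine Nat.prod_pow_factorization_eq_self fun p hp => ?_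
  obtain ⟨i, -, rfl⟩ := Finset.mem_image.mp (Finsupp.mapDomain_support hp)
  exact Nat.prime_nth_prime i

lemma primeProd_injective : Function.Injective primeProd := fun a b h => by
  have := congrArg Nat.factorization h
  rwa [factorization_primeProd, factorization_primeProd,
    (Finsupp.mapDomain_injective (Nat.nth_injective Nat.infinite_setOfPred_prime)).eq_iff] at this

lemma exists_primeProd_eq {n : ℕ} (hn : n ≠ 0) : ∃ m, primeProd m = n := by
  have hinj := Nat.nth_injective Nat.infinite_setOfPred_prime
  have hsupp : ↑n.factorization.support ⊆ Set.range (Nat.nth Nat.Prime) := by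
    rw [Nat.range_nth_of_infinite Nat.infinite_setOfPred_prime]
    exact fun p hp => Nat.prime_of_mem_primeFactors hp
  refine ⟨Finsupp.comapDomain _ n.factorization hinj.injOn, ?_⟩
  rw [primeProd_eq_prod_pow_mapDomain, Finsupp.mapDomain_comapDomain _ hinj _ hsupp,
    Nat.prod_factorization_pow_eq_self hn]

noncomputable def primeRatio (m d : ℕ →₀ ℕ) : Qpos :=
  ⟨primeProd m / primeProd d, div_pos (mod_cast primeProd_pos m) (mod_cast primeProd_pos d)⟩

lemma primeRatio_val (m d : ℕ →₀ ℕ) :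
    (primeRatio m d).val = (primeProd m : ℚ) / primeProd d := rfl

lemma primeProd_mul_primeRatio (m d : ℕ →₀ ℕ) :
    (primeProd d : ℚ) * (primeRatio m d).val = primeProd m :=
  mul_div_cancel₀ _ (mod_cast (primeProd_pos d).ne')

lemma primeRatio_mul (a b da db : ℕ →₀ ℕ) :
    primeRatio a da * primeRatio b db = primeRatio (a + b) (da + db) :=
  Subtype.ext <| by
    change (primeRatio a da).val * (primeRatio b db).val = _
    rw [primeRatio_val, primeRatio_val, primeRatio_val, div_mul_div_comm, primeProd_add,
      primeProd_add, Nat.cast_mul, Nat.cast_mul]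

lemma primeRatio_eq_primeRatio_iff {a b c d : ℕ →₀ ℕ} :
    primeRatio a b = primeRatio c d ↔ a + d = c + b := by
  have hb : (primeProd b : ℚ) ≠ 0 := mod_cast (primeProd_pos b).ne'
  have hd : (primeProd d : ℚ) ≠ 0 := mod_cast (primeProd_pos d).ne'
  rw [← primeProd_injective.eq_iff, primeProd_add, primeProd_add, ← Nat.cast_inj (R := ℚ),
    Nat.cast_mul, Nat.cast_mul, ← div_eq_div_iff hb hd]
  exact Subtype.ext_iff

lemma primeRatio_add_add (m d e : ℕ →₀ ℕ) : primeRatio (m + e) (d + e) = primeRatio m d :=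
  primeRatio_eq_primeRatio_iff.mpr (by abel)

lemma primeRatio_left_injective (d : ℕ →₀ ℕ) : Function.Injective (primeRatio · d) :=
  fun _ _ h => add_right_cancel (primeRatio_eq_primeRatio_iff.mp h)

lemma mem_range_primeRatio_iff {d : ℕ →₀ ℕ} {q : Qpos} :
    q ∈ Set.range (primeRatio · d) ↔ ∃ n : ℕ+, (primeProd d : ℚ) * q.val = n := by
  have hd : (primeProd d : ℚ) ≠ 0 := mod_cast (primeProd_pos d).ne'
  constructor
  · rintro ⟨m, rfl⟩
    exact ⟨⟨primeProd m, primeProd_pos m⟩, primeProd_mul_primeRatio m d⟩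
  · rintro ⟨n, hn⟩
    obtain ⟨m, hm⟩ := exists_primeProd_eq n.ne_zero
    refine ⟨m, Subtype.ext ?_⟩
    rw [primeRatio_val, hm, ← hn, mul_div_cancel_left₀ _ hd]

section Series

variable {R : Type*} [CommRing R]

def HasDenominator (α : Qpos → R) (d : ℕ →₀ ℕ) : Prop :=
  Function.support α ⊆ Set.range (primeRatio · d)

lemma hasDenominator_iff {α : Qpos → R} {d : ℕ+} {md : ℕ →₀ ℕ} (hmd : primeProd md = d) :
    HasDenominator α md ↔ ∀ q : Qpos, α q ≠ 0 → ∃ n : ℕ+, (d : ℚ) * q.val = n := by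
  simp only [HasDenominator, Set.subset_def, Function.mem_support, mem_range_primeRatio_iff, hmd]

lemma HasDenominator.add_right {α : Qpos → R} {d : ℕ →₀ ℕ} (h : HasDenominator α d)
    (e : ℕ →₀ ℕ) : HasDenominator α (d + e) := by
  rintro q hq
  obtain ⟨m, rfl⟩ := h hq
  exact ⟨m + e, primeRatio_add_add m d e⟩

lemma HasDenominator.add {α β : Qpos → R} {d : ℕ →₀ ℕ} (hα : HasDenominator α d)
    (hβ : HasDenominator β d) : HasDenominator (α + β) d :=
  (Function.support_add α β).trans (Set.union_subset hα hβ)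

noncomputable def series (α : Qpos → R) (d : ℕ →₀ ℕ) : MvPowerSeries ℕ R :=
  fun m => α (primeRatio m d)

@[simp]
lemma coeff_series (α : Qpos → R) (d m : ℕ →₀ ℕ) : coeff m (series α d) = α (primeRatio m d) :=
  rfl

lemma series_add (α β : Qpos → R) (d : ℕ →₀ ℕ) :
    series (α + β) d = series α d + series β d :=
  rfl

lemma series_injective {α β : Qpos → R} {d : ℕ →₀ ℕ} (hα : HasDenominator α d)
    (hβ : HasDenominator β d) (h : series α d = series β d) : α = β := by
  funext q
  by_cases hq : q ∈ Set.range (primeRatio · d)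
  · obtain ⟨m, rfl⟩ := hq
    exact congrArg (coeff m) h
  · rw [Function.notMem_support.mp (mt (@hα q) hq), Function.notMem_support.mp (mt (@hβ q) hq)]

lemma monomial_mul_series {α : Qpos → R} {d : ℕ →₀ ℕ} (h : HasDenominator α d)
    (e : ℕ →₀ ℕ) : monomial e 1 * series α d = series α (d + e) := by
  ext m
  rw [coeff_monomial_mul, one_mul, coeff_series]
  split_ifs with hem
  · rw [coeff_series, ← primeRatio_add_add (m - e) d e, tsub_add_cancel_of_le hem]
  · refine (Function.notMem_support.mp fun hm => hem ?_).symm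
    obtain ⟨k, hk⟩ := h hm
    have hkm : k + e + d = m + d := by rw [← primeRatio_eq_primeRatio_iff.mp hk]; abel
    exact le_iff_exists_add'.mpr ⟨k, (add_right_cancel hkm).symm⟩

lemma HasDenominator.dconv {α β : Qpos → R} {da db : ℕ →₀ ℕ} (hα : HasDenominator α da)
    (hβ : HasDenominator β db) : HasDenominator (dconv α β) (da + db) := by
  intro q hq
  obtain ⟨⟨_, _⟩, hp, hne⟩ := exists_ne_zero_of_finsum_mem_ne_zero hq
  obtain ⟨a, rfl⟩ := hα (left_ne_zero_of_mul hne)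
  obtain ⟨b, rfl⟩ := hβ (right_ne_zero_of_mul hne)
  exact ⟨a + b, (primeRatio_mul a b da db).symm.trans hp⟩

lemma series_dconv {α β : Qpos → R} {da db : ℕ →₀ ℕ} (hα : HasDenominator α da)
    (hβ : HasDenominator β db) :
    series (dconv α β) (da + db) = series α da * series β db := by
  classical
  ext m
  set φ : (ℕ →₀ ℕ) × (ℕ →₀ ℕ) → Qpos × Qpos := fun x => (primeRatio x.1 da, primeRatio x.2 db)
  have hφ : Function.Injective φ :=
    (primeRatio_left_injective da).prodMap (primeRatio_left_injective db)
  have hφm (x) : φ x ∈ {p : Qpos × Qpos | p.1 * p.2 = primeRatio m (da + db)} ↔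
      x ∈ antidiagonal m := by
    simp only [Set.mem_ofPred_eq, primeRatio_mul, (primeRatio_left_injective _).eq_iff,
      mem_antidiagonal, φ]
  have hfiber : ∀ p ∈ Function.support fun p : Qpos × Qpos => α p.1 * β p.2,
      p ∈ {p : Qpos × Qpos | p.1 * p.2 = primeRatio m (da + db)} ↔
        p ∈ φ '' ↑(antidiagonal m) := by
    rintro ⟨_, _⟩ hp
    obtain ⟨a, rfl⟩ := hα (left_ne_zero_of_mul hp)
    obtain ⟨b, rfl⟩ := hβ (right_ne_zero_of_mul hp)
    exact (hφm (a, b)).trans (hφ.mem_set_image.trans Finset.mem_coe).symm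
  rw [coeff_mul]
  change ∑ᶠ p ∈ {p : Qpos × Qpos | p.1 * p.2 = primeRatio m (da + db)}, α p.1 * β p.2 = _
  rw [finsum_mem_inter_support_eq' _ _ _ hfiber, finsum_mem_image hφ.injOn,
    finsum_mem_coe_finset]
  rfl

end Series

section Localization

variable {R : Type*} [CommRing R]

lemma mem_monomialSubmonoid_iff {x : MvPowerSeries ℕ R} :
    x ∈ monomialSubmonoid R ↔ ∃ m, monomial m 1 = x := by
  simp only [monomialSubmonoid, Submonoid.mem_closure_range_iff, monomial_one_eq, eq_comm]

lemma monomialSubmonoid_le_nonZeroDivisors : monomialSubmonoid R ≤ (MvPowerSeries ℕ R)⁰ :=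
  Submonoid.closure_le.mpr (Set.range_subset_iff.mpr fun _ => X_mem_nonzeroDivisors)

noncomputable def monomialOne (m : ℕ →₀ ℕ) : monomialSubmonoid R :=
  ⟨monomial m 1, mem_monomialSubmonoid_iff.mpr ⟨m, rfl⟩⟩

lemma monomialOne_add (d e : ℕ →₀ ℕ) :
    monomialOne (R := R) (d + e) = monomialOne d * monomialOne e :=
  Subtype.ext (by simp only [monomialOne, Submonoid.coe_mul, monomial_mul_monomial, mul_one])

lemma mk_left_injective (s : monomialSubmonoid R) :
    Function.Injective fun F : MvPowerSeries ℕ R => Localization.mk F s := by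
  intro F G h
  obtain ⟨c, hc⟩ := Localization.r_iff_exists.mp (Localization.mk_eq_mk_iff.mp h)
  have hc' : (c : MvPowerSeries ℕ R) ∈ (MvPowerSeries ℕ R)⁰ :=
    monomialSubmonoid_le_nonZeroDivisors c.2
  have hs : (s : MvPowerSeries ℕ R) ∈ (MvPowerSeries ℕ R)⁰ :=
    monomialSubmonoid_le_nonZeroDivisors s.2
  exact (mul_cancel_left_mem_nonZeroDivisors hs).mp
    ((mul_cancel_left_mem_nonZeroDivisors hc').mp hc)

lemma mk_series_add_right {α : Qpos → R} {d : ℕ →₀ ℕ} (h : HasDenominator α d) (e : ℕ →₀ ℕ) :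
    Localization.mk (series α (d + e)) (monomialOne (d + e)) =
      Localization.mk (series α d) (monomialOne d) := by
  rw [← monomial_mul_series h e, monomialOne_add, Localization.mk_eq_mk_iff,
    Localization.r_iff_exists]
  exact ⟨1, by simp only [Submonoid.coe_mul, monomialOne]; ring⟩

lemma mk_series_eq_mk_series {α : Qpos → R} {d d' : ℕ →₀ ℕ} (h : HasDenominator α d)
    (h' : HasDenominator α d') :
    Localization.mk (series α d) (monomialOne d) =
      Localization.mk (series α d') (monomialOne d') := by
  rw [← mk_series_add_right h d', ← mk_series_add_right h' d, add_comm]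

end Localization

section DirFQ

variable {R : Type*} [CommRing R]

lemma exists_hasDenominator (α : DirFQ R) : ∃ d, HasDenominator α.val d := by
  obtain ⟨d, hd⟩ := α.2
  obtain ⟨md, hmd⟩ := exists_primeProd_eq d.ne_zero
  exact ⟨md, (hasDenominator_iff hmd).mpr hd⟩

lemma exists_common_denominator (α β : DirFQ R) :
    ∃ d, HasDenominator α.val d ∧ HasDenominator β.val d := by
  obtain ⟨d, hα⟩ := exists_hasDenominator α
  obtain ⟨d', hβ⟩ := exists_hasDenominator β
  exact ⟨d + d', hα.add_right d', add_comm d' d ▸ hβ.add_right d⟩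

noncomputable def toLocalization (α : DirFQ R) : Localization (monomialSubmonoid R) :=
  let d := (exists_hasDenominator α).choose
  Localization.mk (series α.val d) (monomialOne d)

lemma toLocalization_eq {α : DirFQ R} {d : ℕ →₀ ℕ} (h : HasDenominator α.val d) :
    toLocalization α = Localization.mk (series α.val d) (monomialOne d) :=
  mk_series_eq_mk_series (exists_hasDenominator α).choose_spec h

lemma toLocalization_injective : Function.Injective (toLocalization (R := R)) := by
  intro α β h
  obtain ⟨d, hα, hβ⟩ := exists_common_denominator α β
  rw [toLocalization_eq hα, toLocalization_eq hβ] at h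
  exact Subtype.ext (series_injective hα hβ (mk_left_injective _ h))

lemma toLocalization_surjective : Function.Surjective (toLocalization (R := R)) := by
  intro z
  induction z using Localization.ind with | H y => ?_
  obtain ⟨F, s⟩ := y
  obtain ⟨u, hu⟩ := mem_monomialSubmonoid_iff.mp s.2
  obtain rfl : monomialOne u = s := Subtype.ext hu
  let α : Qpos → R := Function.extend (primeRatio · u) (fun m => coeff m F) 0
  have hα : HasDenominator α u := fun q hq => by_contra fun h => hq (Function.extend_apply' _ _ _ h)
  have hF : series α u = F := by ext m; exact (primeRatio_left_injective u).extend_apply _ _ m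
  exact ⟨⟨α, ⟨primeProd u, primeProd_pos u⟩, (hasDenominator_iff rfl).mp hα⟩,
    (toLocalization_eq hα).trans (by rw [hF])⟩

variable [CommRing (DirFQ R)]

lemma toLocalization_add (hadd : ∀ α β : DirFQ R, ∀ q, (α + β).val q = α.val q + β.val q)
    (α β : DirFQ R) : toLocalization (α + β) = toLocalization α + toLocalization β := by
  obtain ⟨d, hα, hβ⟩ := exists_common_denominator α β
  have hsum : (α + β).val = α.val + β.val := funext (hadd α β)
  have hαβ : HasDenominator (α + β).val d := hsum ▸ hα.add hβ
  rw [toLocalization_eq hα, toLocalization_eq hβ, toLocalization_eq hαβ,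
    Localization.add_mk_self, hsum, series_add]

lemma toLocalization_mul (hmul : ∀ α β : DirFQ R, (α * β).val = dconv α.val β.val)
    (α β : DirFQ R) : toLocalization (α * β) = toLocalization α * toLocalization β := by
  obtain ⟨d, hα⟩ := exists_hasDenominator α
  obtain ⟨d', hβ⟩ := exists_hasDenominator β
  have hαβ : HasDenominator (α * β).val (d + d') := hmul α β ▸ hα.dconv hβ
  rw [toLocalization_eq hα, toLocalization_eq hβ, toLocalization_eq hαβ, Localization.mk_mul,
    hmul, series_dconv hα hβ, monomialOne_add]

end DirFQ

end DirichletQ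

open DirichletQ

/-- `F̃(ℚ₊*,R) ≅ R[[x₁,x₂,...]][x₁⁻¹,x₂⁻¹,...]`, i.e. `F̃(ℚ₊*,R)` is isomorphic as an
`R`-algebra to the localization of `R[[x₁,x₂,...]]` at the monomials; under the isomorphism
`α` corresponds to the fraction `(Σ_q α(q)(qd)^x) / d^x`. -/
theorem stmt18 {R : Type*} [CommRing R]
    [instQ : CommRing (DirFQ R)] (hQ : IsDirichletRingQ instQ) :
    ∃ e : DirFQ R ≃+* Localization (monomialSubmonoid R),
      ∀ (α : DirFQ R) (d : ℕ+)
        (_ : ∀ q : Qpos, α.val q ≠ 0 → ∃ n : ℕ+, (d : ℚ) * q.val = (n : ℚ))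
        (md : ℕ →₀ ℕ)
        (_ : (d : ℕ) = ∏ i ∈ md.support, (Nat.nth Nat.Prime i) ^ (md i))
        (F : MvPowerSeries ℕ R)
        (_ : ∀ (m : ℕ →₀ ℕ) (q : Qpos),
          (d : ℚ) * q.val = ((∏ i ∈ m.support, (Nat.nth Nat.Prime i) ^ (m i) : ℕ) : ℚ) →
          MvPowerSeries.coeff m F = α.val q)
        (s : monomialSubmonoid R)
        (_ : (s : MvPowerSeries ℕ R) = ∏ i ∈ md.support, (MvPowerSeries.X i) ^ (md i)),
        e α = Localization.mk F s := by
  obtain ⟨hadd, hmul, -⟩ := hQ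
  refine ⟨{ Equiv.ofBijective _ ⟨toLocalization_injective, toLocalization_surjective⟩ with
    map_mul' := toLocalization_mul hmul, map_add' := toLocalization_add hadd }, ?_⟩
  intro α d hd md hmd F hF s hs
  have hprod : primeProd md = d := hmd.symm
  have hα : HasDenominator α.val md := (hasDenominator_iff hprod).mpr hd
  have hseries : series α.val md = F :=
    MvPowerSeries.ext fun m => (hF m _ (hprod ▸ primeProd_mul_primeRatio m md)).symm
  have hs' : monomialOne md = s := Subtype.ext (hs ▸ MvPowerSeries.monomial_one_eq md)
  exact (toLocalization_eq hα).trans (by rw [hseries, hs'])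
end
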